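/- Fix p with 1 < p < 2 and relaxation parameters with 0 < ε₋ ≤ 1 ≤ ε₊ < ∞. Define a real sequence by α₀ := 0 and α_{n+1} := (max(ε₋, min(α_n, ε₊)))^{2-p}. Then for every n ≥ 1 one has α_n = ε₋^{(2-p)^n}. (This describes the iterates of the relaxed Kačanov iteration applied to the peak function u(x) = 1 − |x| on the unit ball, for which |∇u| ≡ 1.) -/
import Mathlib

/-- for the peak example with `1 < p < 2` and `0 < ε₋ ≤ 1 ≤ ε₊`,
the Kačanov iterates `α₀ = 0`, `α_{n+1} = (clamp α_n)^(2-p)` satisfy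
`α_n = ε₋^((2-p)^n)` for all `n ≥ 1`. -/
theorem stmt_15 (p εm εp : ℝ) (hp1 : 1 < p) (hp2 : p < 2)
    (hεm : 0 < εm) (hεm1 : εm ≤ 1) (hεp1 : 1 ≤ εp)
    (α : ℕ → ℝ) (h0 : α 0 = 0)
    (hrec : ∀ n : ℕ, α (n + 1) = (max εm (min (α n) εp)) ^ (2 - p)) :
    ∀ n : ℕ, 1 ≤ n → α n = εm ^ ((2 - p) ^ n) := by
  have h2p0 : (0:ℝ) < 2 - p := by linarith
  have h2p1 : 2 - p < 1 := by linarith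
  intro n hn
  induction n with
  | zero => omega
  | succ k ih =>
    rcases Nat.eq_or_lt_of_le hn with h | h
    · -- k = 0
      have hk : k = 0 := by omega
      subst hk
      rw [hrec, h0]
      rw [min_eq_left (by linarith), max_eq_left hεm.le, pow_one]
    · have hk1 : 1 ≤ k := by omega
      have hαk := ih hk1
      have he : (0:ℝ) < (2 - p) ^ k := pow_pos h2p0 k
      have he1 : (2 - p) ^ k ≤ 1 := pow_le_one₀ h2p0.le h2p1.le
      have hle1 : εm ^ ((2 - p) ^ k) ≤ 1 :=
        Real.rpow_le_one hεm.le hεm1 he.le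
      have hge : εm ≤ εm ^ ((2 - p) ^ k) := by
        nth_rewrite 1 [← Real.rpow_one εm]
        exact Real.rpow_le_rpow_of_exponent_ge hεm hεm1 he1
      rw [hrec, hαk, min_eq_left (hle1.trans hεp1), max_eq_right hge,
        ← Real.rpow_mul hεm.le, ← pow_succ]
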